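/- arXiv:1905.01374 — 3 statements merged into one kernel-verified Lean document; each statement's English description precedes it below -/
import Mathlib

section
/- For a complex d×d matrix A and p ∈ (1,∞) with q = p/(p-1), the quantity Δ_p(A) = min_{|ξ|=1} Re⟨Aξ, ξ + (1-2/p)ξ̄⟩ satisfies Δ_p(A) = Δ_q(A). -/
/-! Since `1 - 2/q = -(1 - 2/p)` for conjugate exponents, `I_q (i ξ) = i · I_p ξ`. Together with
`A (i ξ) = i · A ξ` this gives `⟨A (i ξ), I_q (i ξ)⟩ = ⟨A ξ, I_p ξ⟩`, and `ξ ↦ i ξ` permutes the unit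
sphere, so both minima are taken over the same set of values. -/

open scoped ComplexConjugate

noncomputable def Ip (p : ℝ) {d : ℕ} (ξ : EuclideanSpace ℂ (Fin d)) : EuclideanSpace ℂ (Fin d) :=
  WithLp.toLp 2 (fun i => ξ i + ((1 - 2 / p : ℝ) : ℂ) * conj (ξ i))

noncomputable def mulVecE {d : ℕ} (A : Matrix (Fin d) (Fin d) ℂ)
    (ξ : EuclideanSpace ℂ (Fin d)) : EuclideanSpace ℂ (Fin d) :=
  WithLp.toLp 2 (fun i => ∑ j, A i j * ξ j)

noncomputable def Delta (p : ℝ) {d : ℕ} (A : Matrix (Fin d) (Fin d) ℂ) : ℝ :=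
  sInf { r : ℝ | ∃ ξ : EuclideanSpace ℂ (Fin d), ‖ξ‖ = 1 ∧
    r = (@inner ℂ _ _ (mulVecE A ξ) (Ip p ξ)).re }

section

variable {d : ℕ}

lemma mulVecE_smul (A : Matrix (Fin d) (Fin d) ℂ) (c : ℂ) (ξ : EuclideanSpace ℂ (Fin d)) :
    mulVecE A (c • ξ) = c • mulVecE A ξ := by
  ext i
  simp only [mulVecE, PiLp.smul_apply, smul_eq_mul, Finset.mul_sum]
  exact Finset.sum_congr rfl fun j _ => by ring

lemma Ip_I_smul {p q : ℝ} (h : 1 - 2 / q = -(1 - 2 / p)) (ξ : EuclideanSpace ℂ (Fin d)) :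
    Ip q (Complex.I • ξ) = Complex.I • Ip p ξ := by
  ext i
  simp only [Ip, PiLp.smul_apply, smul_eq_mul, map_mul, Complex.conj_I, h, Complex.ofReal_neg]
  ring

lemma inner_mulVecE_Ip_I_smul {p q : ℝ} (h : 1 - 2 / q = -(1 - 2 / p))
    (A : Matrix (Fin d) (Fin d) ℂ) (ξ : EuclideanSpace ℂ (Fin d)) :
    inner ℂ (mulVecE A (Complex.I • ξ)) (Ip q (Complex.I • ξ))
      = inner ℂ (mulVecE A ξ) (Ip p ξ) := by
  rw [mulVecE_smul, Ip_I_smul h, inner_smul_left, inner_smul_right, Complex.conj_I, ← mul_assoc,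
    neg_mul, Complex.I_mul_I, neg_neg, one_mul]

lemma Delta_eq_of_coeff_eq_neg {p q : ℝ} (h : 1 - 2 / q = -(1 - 2 / p))
    (A : Matrix (Fin d) (Fin d) ℂ) : Delta p A = Delta q A := by
  have h' : 1 - 2 / p = -(1 - 2 / q) := by rw [h, neg_neg]
  have norm_I_smul (ξ : EuclideanSpace ℂ (Fin d)) : ‖Complex.I • ξ‖ = ‖ξ‖ := by
    rw [norm_smul, Complex.norm_I, one_mul]
  unfold Delta
  congr 1
  ext r
  constructor
  · rintro ⟨ξ, hξ, rfl⟩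
    exact ⟨Complex.I • ξ, (norm_I_smul ξ).trans hξ, by rw [inner_mulVecE_Ip_I_smul h]⟩
  · rintro ⟨ξ, hξ, rfl⟩
    exact ⟨Complex.I • ξ, (norm_I_smul ξ).trans hξ, by rw [inner_mulVecE_Ip_I_smul h']⟩

end

lemma one_sub_two_div_conjExponent {p : ℝ} (hp : 1 < p) :
    1 - 2 / (p / (p - 1)) = -(1 - 2 / p) := by
  have hp0 : p ≠ 0 := by positivity
  have hp1 : p - 1 ≠ 0 := sub_ne_zero.mpr hp.ne'
  field_simp
  ring

theorem stmt0_general {d : ℕ} (A : Matrix (Fin d) (Fin d) ℂ) (p : ℝ) (hp : 1 < p) :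
    Delta p A = Delta (p / (p - 1)) A :=
  Delta_eq_of_coeff_eq_neg (one_sub_two_div_conjExponent hp) A

theorem stmt0 {d : ℕ} (hd : 0 < d) (A : Matrix (Fin d) (Fin d) ℂ) (p : ℝ) (hp : 1 < p) :
    Delta p A = Delta (p / (p - 1)) A :=
  stmt0_general A p hp
end

section
/- Let A = aI and B = bI be positive multiples of the d×d identity matrix (a,b > 0), p > 1, and F_p(ω) = |ω|^p on ℝ⁴ = ℝ²×ℝ². Then F_p is (A,B)-convex in ℝ⁴∖{0} if and only if |1 − 2/p| ≤ 2√(ab)/(a+b). -/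
open scoped ComplexConjugate

/-- The real form `M(A) = [[Re A, −Im A],[Im A, Re A]]` of a complex matrix, as a function on
`(Fin 2 × Fin d) × (Fin 2 × Fin d)`; the first coordinate `0` indexes the "real" block and `1`
the "imaginary" block. -/
noncomputable def realForm {d : ℕ} (A : Matrix (Fin d) (Fin d) ℂ) :
    (Fin 2 × Fin d) → (Fin 2 × Fin d) → ℝ := fun x y =>
  if x.1 = 0 then (if y.1 = 0 then (A x.2 y.2).re else -((A x.2 y.2).im))
  else (if y.1 = 0 then (A x.2 y.2).im else (A x.2 y.2).re)

/-- Entries of the Hessian matrix `D²Φ(ω)` of a function on a Euclidean space. -/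
noncomputable def hessE {ι : Type*} [Fintype ι] [DecidableEq ι]
    (Φ : EuclideanSpace ℝ ι → ℝ) (ω : EuclideanSpace ℝ ι) (i j : ι) : ℝ :=
  iteratedFDeriv ℝ 2 Φ ω ![EuclideanSpace.single i 1, EuclideanSpace.single j 1]

/-- Generalized Hessian quadratic form
`H^{(A₁,…,A_l)}_Φ[ω;X] = ⟨(M(A₁*)⊕⋯⊕M(A_l*))·((D²Φ)(ω)⊗I_{ℝ^d}) X, X⟩`. -/
noncomputable def genHess {l d : ℕ} (A : Fin l → Matrix (Fin d) (Fin d) ℂ)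
    (Φ : EuclideanSpace ℝ (Fin l × Fin 2) → ℝ) (ω : EuclideanSpace ℝ (Fin l × Fin 2))
    (X : Fin l × Fin 2 × Fin d → ℝ) : ℝ :=
  ∑ j, ∑ a, ∑ m, (∑ b, ∑ n, realForm (A j).conjTranspose (a, m) (b, n) *
      (∑ k, ∑ c, hessE Φ ω (j, b) (k, c) * X (k, c, n))) * X (j, a, m)

/-- Generalized Hessian quadratic form for a single matrix (functions on `ℝ²`):
`H^A_Φ[ζ;X] = ⟨M(A*)·((D²Φ)(ζ)⊗I_{ℝ^d}) X, X⟩`. -/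
noncomputable def genHess1 {d : ℕ} (A : Matrix (Fin d) (Fin d) ℂ)
    (Φ : EuclideanSpace ℝ (Fin 2) → ℝ) (ζ : EuclideanSpace ℝ (Fin 2))
    (X : Fin 2 × Fin d → ℝ) : ℝ :=
  ∑ a, ∑ m, (∑ b, ∑ n, realForm A.conjTranspose (a, m) (b, n) *
      (∑ c, hessE Φ ζ b c * X (c, n))) * X (a, m)

/-- The identification `V_d : ℂ^d → ℝ^{2d}`. -/
noncomputable def Vd {d : ℕ} (ξ : EuclideanSpace ℂ (Fin d)) : Fin 2 × Fin d → ℝ :=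
  fun x => if x.1 = 0 then (ξ x.2).re else (ξ x.2).im

/-!
At `ω = (u, v) ∈ ℝ² × ℝ²` and in a direction `(x, y)`, the Hessian form of `|ω|^p` weighted by
`a` on the first block and `b` on the second is
`p |ω|^(p-4) (|ω|² (a|x|² + b|y|²) + (p-2)(⟨u,x⟩ + ⟨v,y⟩)(a⟨u,x⟩ + b⟨v,y⟩))`,
and for `A = aI`, `B = bI` the `(A,B)`-Hessian is a sum of `d` such forms. Bounding `|x|²` and
`|y|²` below by Cauchy–Schwarz leaves a binary quadratic form in `⟨u,x⟩, ⟨v,y⟩`; its discriminant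
is nonpositive for every `|u|, |v|` exactly when `(p-2)²(a+b)² ≤ 4abp²`, the worst case being
`|u| = |v|`. Testing `u = v`, `x ∥ u`, `y ∥ u` shows that the condition is also necessary.
-/

open scoped RealInnerProductSpace

section NormRpow

variable {E : Type*} [NormedAddCommGroup E] [InnerProductSpace ℝ E]

theorem hasFDerivAt_norm_rpow_of_ne_zero (q : ℝ) {x : E} (hx : x ≠ 0) :
    HasFDerivAt (fun x : E ↦ ‖x‖ ^ q) ((q * ‖x‖ ^ (q - 2)) • innerSL ℝ x) x := by
  apply HasStrictFDerivAt.hasFDerivAt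
  convert! (hasStrictFDerivAt_norm_sq x).rpow_const (p := q / 2) (by simp [hx]) using 0
  simp_rw [← Real.rpow_natCast_mul (norm_nonneg _), ← Nat.cast_smul_eq_nsmul ℝ, smul_smul]
  ring_nf

theorem fderiv_fderiv_norm_rpow_apply {p : ℝ} (hp : 1 < p) {x : E} (hx : x ≠ 0) (v w : E) :
    fderiv ℝ (fderiv ℝ (fun x : E ↦ ‖x‖ ^ p)) x v w =
      p * (p - 2) * ‖x‖ ^ (p - 4) * (⟪x, v⟫ * ⟪x, w⟫) + p * ‖x‖ ^ (p - 2) * ⟪v, w⟫ := by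
  have hD : fderiv ℝ (fun x : E ↦ ‖x‖ ^ p) = fun x ↦ (p * ‖x‖ ^ (p - 2)) • innerSL ℝ x :=
    funext fun x ↦ fderiv_norm_rpow x hp
  have hDD : HasFDerivAt (fun x : E ↦ (p * ‖x‖ ^ (p - 2)) • innerSL ℝ x) _ x :=
    ((hasFDerivAt_norm_rpow_of_ne_zero (p - 2) hx).const_mul p).smul
      (innerSL ℝ (E := E)).hasFDerivAt
  rw [hD, hDD.fderiv]
  simp only [add_apply, smul_apply, ContinuousLinearMap.smulRight_apply, innerSL_apply_apply,
    smul_eq_mul]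
  rw [innerSL_apply_apply]
  ring_nf

end NormRpow

theorem hessE_norm_rpow {ι : Type*} [Fintype ι] [DecidableEq ι] {p : ℝ} (hp : 1 < p)
    {ω : EuclideanSpace ℝ ι} (hω : ω ≠ 0) (i j : ι) :
    hessE (fun w ↦ ‖w‖ ^ p) ω i j =
      p * (p - 2) * ‖ω‖ ^ (p - 4) * (ω i * ω j) +
        p * ‖ω‖ ^ (p - 2) * (if i = j then 1 else 0) := by
  rw [hessE, iteratedFDeriv_two_apply]
  simp [fderiv_fderiv_norm_rpow_apply hp hω, EuclideanSpace.inner_single_right,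
    mul_comm, eq_comm]

theorem sum_weighted_hessE_norm_rpow {ι : Type*} [Fintype ι] [DecidableEq ι] {p : ℝ} (hp : 1 < p)
    {ω : EuclideanSpace ℝ ι} (hω : ω ≠ 0) (c Y : ι → ℝ) :
    ∑ i, c i * (∑ k, hessE (fun w ↦ ‖w‖ ^ p) ω i k * Y k) * Y i =
      p * ‖ω‖ ^ (p - 4) * (‖ω‖ ^ 2 * ∑ i, c i * Y i ^ 2 +
        (p - 2) * (∑ k, ω k * Y k) * ∑ i, c i * ω i * Y i) := by
  set S := ∑ k, ω k * Y k
  have hpow : ‖ω‖ ^ (p - 2) = ‖ω‖ ^ (p - 4) * ‖ω‖ ^ 2 := by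
    rw [show p - 2 = p - 4 + 2 by ring, Real.rpow_add (norm_pos_iff.2 hω), Real.rpow_two]
  have hrow : ∀ i, ∑ k, hessE (fun w ↦ ‖w‖ ^ p) ω i k * Y k =
      p * ‖ω‖ ^ (p - 4) * ((p - 2) * S * ω i + ‖ω‖ ^ 2 * Y i) := by
    intro i
    simp only [hessE_norm_rpow hp hω, add_mul, Finset.sum_add_distrib, mul_ite, mul_one,
      mul_zero, ite_mul, zero_mul, Finset.sum_ite_eq, Finset.mem_univ, if_true]
    rw [Finset.sum_congr rfl fun k _ ↦ show p * (p - 2) * ‖ω‖ ^ (p - 4) * (ω i * ω k) * Y k =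
      p * (p - 2) * ‖ω‖ ^ (p - 4) * ω i * (ω k * Y k) by ring, ← Finset.mul_sum, hpow]
    ring
  simp only [hrow, Finset.mul_sum, ← Finset.sum_add_distrib, mul_add]
  exact Finset.sum_congr rfl fun i _ ↦ by ring

theorem realForm_conjTranspose_smul_one {d : ℕ} (r : ℝ) (x y : Fin 2 × Fin d) :
    realForm ((r : ℂ) • (1 : Matrix (Fin d) (Fin d) ℂ)).conjTranspose x y =
      if x = y then r else 0 := by
  obtain ⟨xa, xm⟩ := x
  obtain ⟨ya, ym⟩ := y
  rcases eq_or_ne xm ym with rfl | hm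
  · fin_cases xa <;> fin_cases ya <;> simp [realForm]
  · fin_cases xa <;> fin_cases ya <;> simp [realForm, hm, hm.symm]

theorem genHess_smul_one {l d : ℕ} (c : Fin l → ℝ) (Φ : EuclideanSpace ℝ (Fin l × Fin 2) → ℝ)
    (ω : EuclideanSpace ℝ (Fin l × Fin 2)) (X : Fin l × Fin 2 × Fin d → ℝ) :
    genHess (fun j ↦ (c j : ℂ) • (1 : Matrix (Fin d) (Fin d) ℂ)) Φ ω X =
      ∑ m, ∑ i : Fin l × Fin 2,
        c i.1 * (∑ k, hessE Φ ω i k * X (k.1, k.2, m)) * X (i.1, i.2, m) := by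
  simp only [genHess, realForm_conjTranspose_smul_one, ite_mul, zero_mul, Prod.mk.injEq,
    ite_and, Finset.sum_ite_irrel, Finset.sum_ite_eq, Finset.mem_univ, if_true,
    Finset.sum_const_zero, Fintype.sum_prod_type, Fin.sum_univ_two]
  rw [Finset.sum_comm]
  simp only [Finset.sum_add_distrib]

theorem quadratic_nonneg_of_sq_le {A B C : ℝ} (hA : 0 ≤ A) (hB : 0 ≤ B) (h : C ^ 2 ≤ 4 * A * B)
    (x y : ℝ) : 0 ≤ A * x ^ 2 + B * y ^ 2 + C * x * y := by
  rcases hA.eq_or_lt with rfl | hA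
  · obtain rfl : C = 0 := by nlinarith
    nlinarith [mul_nonneg hB (sq_nonneg y)]
  · nlinarith [sq_nonneg (2 * A * x + C * y), mul_nonneg hA.le hB]

section TwoBlockForm

variable {a b t P R X Z α β : ℝ}

theorem twoBlock_form_nonneg_of_left_eq_zero (ha : 0 ≤ a) (hb : 0 ≤ b) (ht : -1 ≤ t)
    (hP : P = 0) (hR : 0 ≤ R) (hX : 0 ≤ X) (hα : α ^ 2 ≤ P * X) (hβ : β ^ 2 ≤ R * Z) :
    0 ≤ (P + R) * (a * X + b * Z) + t * (α + β) * (a * α + b * β) := by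
  subst hP
  obtain rfl : α = 0 := by nlinarith
  have hRZ : 0 ≤ R * Z + t * β ^ 2 := by
    nlinarith [mul_nonneg (neg_le_iff_add_nonneg'.mp ht) (sq_nonneg β)]
  nlinarith [mul_nonneg ha (mul_nonneg hR hX), mul_nonneg hb hRZ]

theorem twoBlock_form_nonneg_of_pos (ha : 0 < a) (hb : 0 < b) (ht : -1 ≤ t)
    (hcond : t ^ 2 * (a + b) ^ 2 ≤ 4 * a * b * (t + 2) ^ 2)
    (hP : 0 < P) (hR : 0 < R) (hα : α ^ 2 ≤ P * X) (hβ : β ^ 2 ≤ R * Z) :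
    0 ≤ (P + R) * (a * X + b * Z) + t * (α + β) * (a * α + b * β) := by
  have h1t : 0 ≤ 1 + t := by linarith
  have hPR : 0 < P * R := mul_pos hP hR
  have hA : 0 ≤ a * R * ((1 + t) * P + R) := by positivity
  have hB : 0 ≤ b * P * (P + (1 + t) * R) := by positivity
  have hdisc : (t * (a + b) * P * R) ^ 2 ≤
      4 * (a * R * ((1 + t) * P + R)) * (b * P * (P + (1 + t) * R)) := by
    have h₁ : 0 ≤ 4 * a * b * (1 + t) * (P - R) ^ 2 * (P * R) := by positivity
    have h₂ : 0 ≤ (4 * a * b * (t + 2) ^ 2 - t ^ 2 * (a + b) ^ 2) * (P * R) ^ 2 :=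
      mul_nonneg (sub_nonneg.2 hcond) (sq_nonneg _)
    linarith
  -- `P * R` times the form is a quadratic in `(α, β)` plus Cauchy–Schwarz slack
  have hid : P * R * ((P + R) * (a * X + b * Z) + t * (α + β) * (a * α + b * β)) =
      (a * R * ((1 + t) * P + R) * α ^ 2 + b * P * (P + (1 + t) * R) * β ^ 2 +
        t * (a + b) * P * R * α * β) +
      a * R * (P + R) * (P * X - α ^ 2) + b * P * (P + R) * (R * Z - β ^ 2) := by ring
  have hq := quadratic_nonneg_of_sq_le hA hB hdisc α β
  have hα' : 0 ≤ a * R * (P + R) * (P * X - α ^ 2) := by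
    have := sub_nonneg.2 hα; positivity
  have hβ' : 0 ≤ b * P * (P + R) * (R * Z - β ^ 2) := by
    have := sub_nonneg.2 hβ; positivity
  exact nonneg_of_mul_nonneg_right (by linarith) hPR

theorem twoBlock_form_nonneg (ha : 0 < a) (hb : 0 < b) (ht : -1 ≤ t)
    (hcond : t ^ 2 * (a + b) ^ 2 ≤ 4 * a * b * (t + 2) ^ 2)
    (hP : 0 ≤ P) (hR : 0 ≤ R) (hX : 0 ≤ X) (hZ : 0 ≤ Z) (hα : α ^ 2 ≤ P * X)
    (hβ : β ^ 2 ≤ R * Z) :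
    0 ≤ (P + R) * (a * X + b * Z) + t * (α + β) * (a * α + b * β) := by
  rcases hP.eq_or_lt with hP0 | hP
  · exact twoBlock_form_nonneg_of_left_eq_zero ha.le hb.le ht hP0.symm hR hX hα hβ
  rcases hR.eq_or_lt with hR0 | hR
  · have := twoBlock_form_nonneg_of_left_eq_zero (a := b) hb.le ha.le ht hR0.symm hP.le hZ
      hβ hα
    linarith
  exact twoBlock_form_nonneg_of_pos ha hb ht hcond hP hR hα hβ

end TwoBlockForm

theorem abs_one_sub_two_div_le_iff {a b p : ℝ} (ha : 0 < a) (hb : 0 < b) (hp : 0 < p) :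
    |1 - 2 / p| ≤ 2 * √(a * b) / (a + b) ↔ (p - 2) ^ 2 * (a + b) ^ 2 ≤ 4 * a * b * p ^ 2 := by
  rw [← sq_le_sq₀ (abs_nonneg _) (by positivity), sq_abs, div_pow, mul_pow,
    Real.sq_sqrt (by positivity), one_sub_div hp.ne', div_pow,
    div_le_div_iff₀ (by positivity) (by positivity)]
  constructor <;> intro h <;> linarith

theorem normRpow_block_form_nonneg {a b p : ℝ} (ha : 0 < a) (hb : 0 < b) (hp : 1 < p)
    (hcond : (p - 2) ^ 2 * (a + b) ^ 2 ≤ 4 * a * b * p ^ 2)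
    {ω : EuclideanSpace ℝ (Fin 2 × Fin 2)} (hω : ω ≠ 0) (Y : Fin 2 × Fin 2 → ℝ) :
    0 ≤ ∑ i : Fin 2 × Fin 2, ![a, b] i.1 * (∑ k, hessE (fun w ↦ ‖w‖ ^ p) ω i k * Y k) * Y i := by
  rw [sum_weighted_hessE_norm_rpow hp hω (fun i ↦ ![a, b] i.1)]
  refine mul_nonneg (by positivity) ?_
  have h := twoBlock_form_nonneg ha hb (t := p - 2) (by linarith) (by rwa [sub_add_cancel])
    (P := ω (0, 0) ^ 2 + ω (0, 1) ^ 2) (R := ω (1, 0) ^ 2 + ω (1, 1) ^ 2)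
    (X := Y (0, 0) ^ 2 + Y (0, 1) ^ 2) (Z := Y (1, 0) ^ 2 + Y (1, 1) ^ 2)
    (α := ω (0, 0) * Y (0, 0) + ω (0, 1) * Y (0, 1))
    (β := ω (1, 0) * Y (1, 0) + ω (1, 1) * Y (1, 1)) (by positivity) (by positivity)
    (by positivity) (by positivity)
    (by nlinarith [sq_nonneg (ω (0, 0) * Y (0, 1) - ω (0, 1) * Y (0, 0))])
    (by nlinarith [sq_nonneg (ω (1, 0) * Y (1, 1) - ω (1, 1) * Y (1, 0))])
  rw [EuclideanSpace.real_norm_sq_eq]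
  simp only [Fintype.sum_prod_type, Fin.sum_univ_two, Matrix.cons_val_zero, Matrix.cons_val_one]
  exact h.trans_eq (by ring)

theorem sq_le_of_forall_normRpow_block_form_nonneg {a b p : ℝ} (hp : 1 < p)
    (H : ∀ ω : EuclideanSpace ℝ (Fin 2 × Fin 2), ω ≠ 0 → ∀ Y : Fin 2 × Fin 2 → ℝ,
      0 ≤ ∑ i : Fin 2 × Fin 2, ![a, b] i.1 * (∑ k, hessE (fun w ↦ ‖w‖ ^ p) ω i k * Y k) * Y i) :
    (p - 2) ^ 2 * (a + b) ^ 2 ≤ 4 * a * b * p ^ 2 := by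
  set ω₀ : EuclideanSpace ℝ (Fin 2 × Fin 2) := WithLp.toLp 2 fun i ↦ if i.2 = 0 then 1 else 0
  have hω₀ : ∀ i, ω₀ i = if i.2 = 0 then 1 else 0 := fun _ ↦ rfl
  have hω₀_ne : ω₀ ≠ 0 := fun h ↦ by simpa [hω₀] using congrArg (· (0, 0)) h
  have hnorm : ‖ω₀‖ ^ 2 = 2 := by
    simp only [EuclideanSpace.real_norm_sq_eq, Fintype.sum_prod_type, Fin.sum_univ_two, hω₀]
    norm_num
  have hscale : 0 < p * ‖ω₀‖ ^ (p - 4) := by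
    have := norm_pos_iff.2 hω₀_ne
    have : 0 < p := by linarith
    positivity
  have hquad : ∀ x : ℝ, 0 ≤ a * p * (x * x) + (p - 2) * (a + b) * x + b * p := by
    intro x
    have h := H ω₀ hω₀_ne fun i ↦ if i.2 = 0 then ![x, 1] i.1 else 0
    rw [sum_weighted_hessE_norm_rpow hp hω₀_ne, hnorm] at h
    simp only [Fintype.sum_prod_type, Fin.sum_univ_two, hω₀] at h
    norm_num at h
    exact (nonneg_of_mul_nonneg_right h hscale).trans_eq (by ring)
  have hdisc := discrim_le_zero hquad
  rw [discrim] at hdisc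
  linarith

/-- for `A = aI`, `B = bI` with `a,b > 0`, the power function `F_p(ω)=|ω|^p`
on `ℝ⁴` is `(A,B)`-convex in `ℝ⁴∖{0}` iff `|1 − 2/p| ≤ 2√(ab)/(a+b)`. -/
theorem stmt12 {d : ℕ} (hd : 0 < d) (a b : ℝ) (ha : 0 < a) (hb : 0 < b) (p : ℝ) (hp : 1 < p) :
    (∀ ω : EuclideanSpace ℝ (Fin 2 × Fin 2), ω ≠ 0 → ∀ X : Fin 2 × Fin 2 × Fin d → ℝ,
        0 ≤ genHess ![(a : ℂ) • (1 : Matrix (Fin d) (Fin d) ℂ),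
            (b : ℂ) • (1 : Matrix (Fin d) (Fin d) ℂ)] (fun w => ‖w‖ ^ p) ω X) ↔
      |1 - 2 / p| ≤ 2 * Real.sqrt (a * b) / (a + b) := by
  have hA : ![(a : ℂ) • (1 : Matrix (Fin d) (Fin d) ℂ), (b : ℂ) • 1] =
      fun j ↦ ((![a, b] j : ℝ) : ℂ) • 1 := by
    ext j : 1; fin_cases j <;> rfl
  simp only [hA, genHess_smul_one, abs_one_sub_two_div_le_iff ha hb (by linarith : 0 < p)]
  constructor
  · intro H
    refine sq_le_of_forall_normRpow_block_form_nonneg hp fun ω hω Y ↦ ?_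
    have h := H ω hω fun i ↦ if i.2.2 = ⟨0, hd⟩ then Y (i.1, i.2.1) else 0
    rwa [Finset.sum_eq_single ⟨0, hd⟩ (fun m _ hm ↦ by simp [hm]) (by simp)] at h
  · intro hcond ω hω X
    exact Finset.sum_nonneg fun m _ ↦ normRpow_block_form_nonneg ha hb hp hcond hω _
end

section
/- Let A be a complex elliptic d×d matrix with Im A ≠ 0, t₀ > 0, and γ ∈ C¹([0,∞)) ∩ C²((0,∞)∖{t₀}). Set Γ(ζ) = γ(|ζ|) on ℝ². If Γ is A-convex in ℝ²∖{|ζ|=t₀}, then either γ is constant or γ'(t) > 0 for all t > 0. -/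
open scoped ComplexConjugate

namespace Stmt15Aux
open scoped RealInnerProductSpace


abbrev E2 := EuclideanSpace ℝ (Fin 2)

lemma hasFDerivAt_norm' {w : E2} (hw : w ≠ 0) :
    ∃ N : E2 →L[ℝ] ℝ, HasFDerivAt (fun x : E2 => ‖x‖) N w ∧ ∀ u, N u = ‖w‖⁻¹ * ⟪w, u⟫ := by
  have h1 : HasFDerivAt (fun x : E2 => ⟪x, x⟫)
      ((fderivInnerCLM ℝ (w, w)).comp ((ContinuousLinearMap.id ℝ E2).prod
        (ContinuousLinearMap.id ℝ E2))) w :=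
    (hasFDerivAt_id w).inner ℝ (hasFDerivAt_id w)
  have hs : ⟪w, w⟫ ≠ 0 := fun h => hw ((@inner_self_eq_zero ℝ _ _ _ _ w).mp h)
  have h2 := HasDerivAt.comp_hasFDerivAt (f := fun x : E2 => ⟪x, x⟫) w
    (Real.hasDerivAt_sqrt hs) h1
  have hnorm : (fun x : E2 => ‖x‖) = fun x : E2 => Real.sqrt ⟪x, x⟫ := by
    funext x
    rw [real_inner_self_eq_norm_mul_norm, Real.sqrt_mul_self (norm_nonneg x)]
  refine ⟨_, by rw [hnorm]; exact h2, fun u => ?_⟩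
  have hsq : Real.sqrt ⟪w, w⟫ = ‖w‖ := by
    rw [real_inner_self_eq_norm_mul_norm, Real.sqrt_mul_self (norm_nonneg w)]
  simp only [ContinuousLinearMap.coe_smul', Pi.smul_apply, ContinuousLinearMap.coe_comp',
    Function.comp_apply, ContinuousLinearMap.prod_apply, ContinuousLinearMap.coe_id', id_eq,
    fderivInnerCLM_apply, smul_eq_mul, hsq]
  rw [real_inner_comm u w]
  have : ‖w‖ ≠ 0 := norm_ne_zero_iff.mpr hw
  field_simp
  ring

lemma hess_eq (γ : ℝ → ℝ) (t₀ : ℝ) (hγ2 : ContDiffOn ℝ 2 γ (Set.Ioi 0 \ {t₀}))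
    {t : ℝ} (ht : 0 < t) (htt : t ≠ t₀) (b c : Fin 2) :
    hessE (fun w : E2 => γ ‖w‖) (t • EuclideanSpace.single (0 : Fin 2) (1:ℝ)) b c =
      if b = 0 then (if c = 0 then deriv (deriv γ) t else 0)
      else (if c = 0 then 0 else deriv γ t / t) := by
  set s : Set ℝ := Set.Ioi 0 \ {t₀} with hs_def
  have hopen : IsOpen s := isOpen_Ioi.sdiff isClosed_singleton
  have hts : t ∈ s := ⟨ht, htt⟩
  set Φ : E2 → ℝ := fun w => γ ‖w‖ with hΦ_def
  set ζ : E2 := t • EuclideanSpace.single (0 : Fin 2) (1:ℝ) with hζ_def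
  have hζnorm : ‖ζ‖ = t := by
    rw [hζ_def, norm_smul, EuclideanSpace.norm_single]
    simp [abs_of_pos ht]
  have hζ0 : ζ ≠ 0 := fun h => by simp [h] at hζnorm; exact ht.ne' hζnorm.symm
  set U : Set E2 := (fun w : E2 => ‖w‖) ⁻¹' s with hU_def
  have hUopen : IsOpen U := hopen.preimage continuous_norm
  have hζU : ζ ∈ U := by simpa [hU_def, hζnorm] using hts
  set e : Fin 2 → E2 := fun i => EuclideanSpace.single i (1:ℝ) with he_def
  set ψ : E2 → ℝ := fun w => deriv γ ‖w‖ / ‖w‖ * w c with hψ_def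
  have hfd : ∀ w ∈ U, fderiv ℝ Φ w (e c) = ψ w := by
    intro w hw
    have hw' : ‖w‖ ∈ s := hw
    have hw0 : w ≠ 0 := by
      have h1 : (0:ℝ) < ‖w‖ := hw'.1
      exact fun h => by rw [h] at h1; simp at h1
    obtain ⟨N, hN, hNval⟩ := hasFDerivAt_norm' hw0
    have hγd : HasDerivAt γ (deriv γ ‖w‖) ‖w‖ :=
      (((hγ2.contDiffAt (hopen.mem_nhds hw')).differentiableAt (by norm_num)).hasDerivAt)
    have hΦd : HasFDerivAt Φ (deriv γ ‖w‖ • N) w := hγd.comp_hasFDerivAt w hN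
    rw [hΦd.fderiv]
    simp only [ContinuousLinearMap.coe_smul', Pi.smul_apply, smul_eq_mul, hNval,
      hψ_def]
    rw [he_def]
    rw [EuclideanSpace.inner_single_right]
    simp [div_eq_mul_inv]
    ring
  have hΦC2 : ContDiffAt ℝ 2 Φ ζ := by
    have h1 : ContDiffAt ℝ 2 γ ‖ζ‖ := hγ2.contDiffAt (hopen.mem_nhds (hζnorm ▸ hts))
    have h2 : ContDiffAt ℝ 2 (fun w : E2 => ‖w‖) ζ := contDiffAt_norm ℝ hζ0
    exact h1.comp ζ h2
  have hd1 : DifferentiableAt ℝ (fderiv ℝ Φ) ζ :=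
    (hΦC2.fderiv_right (m := 1) (le_refl 2)).differentiableAt one_ne_zero
  have step1 : hessE Φ ζ b c = fderiv ℝ (fun w => fderiv ℝ Φ w (e c)) ζ (e b) := by
    rw [hessE, iteratedFDeriv_two_apply]
    have := fderiv_clm_apply (𝕜 := ℝ) (c := fderiv ℝ Φ) (u := fun _ => e c) hd1
      (differentiableAt_const _)
    rw [this]
    simp [he_def]
  rw [step1]
  have heq : (fun w => fderiv ℝ Φ w (e c)) =ᶠ[nhds ζ] ψ :=
    Filter.eventuallyEq_of_mem (hUopen.mem_nhds hζU) hfd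
  rw [heq.fderiv_eq]
  have hγ2' : ContDiffOn ℝ 1 (deriv γ) s := hγ2.deriv_of_isOpen hopen (by norm_num)
  have hdd : HasDerivAt (deriv γ) (deriv (deriv γ) t) t :=
    ((hγ2'.contDiffAt (hopen.mem_nhds hts)).differentiableAt one_ne_zero).hasDerivAt
  have hρ : HasDerivAt (fun u : ℝ => deriv γ u / u)
      ((deriv (deriv γ) t * t - deriv γ t * 1) / (t ^ 2)) t :=
    hdd.div (hasDerivAt_id t) ht.ne'
  obtain ⟨N, hN, hNval⟩ := hasFDerivAt_norm' hζ0
  have hρζ : HasDerivAt (fun u : ℝ => deriv γ u / u)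
      ((deriv (deriv γ) t * t - deriv γ t * 1) / (t ^ 2)) ‖ζ‖ := hζnorm ▸ hρ
  have hcomp := hρζ.comp_hasFDerivAt ζ hN
  have hproj : HasFDerivAt (fun w : E2 => w c) (EuclideanSpace.proj c : E2 →L[ℝ] ℝ) ζ :=
    (EuclideanSpace.proj c : E2 →L[ℝ] ℝ).hasFDerivAt
  have hψd0 := hcomp.mul hproj
  have hψd : HasFDerivAt ψ (((fun u => deriv γ u / u) ∘ norm) ζ • (EuclideanSpace.proj c : E2 →L[ℝ] ℝ) +
      ζ c • ((deriv (deriv γ) t * t - deriv γ t * 1) / t ^ 2) • N) ζ := hψd0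
  have hζc : ∀ j : Fin 2, ζ j = if j = 0 then t else 0 := by
    intro j
    rw [hζ_def]
    by_cases h : j = 0 <;> simp [EuclideanSpace.single_apply, h]
  have hNeb : ∀ j : Fin 2, N (e j) = if j = 0 then 1 else 0 := by
    intro j
    rw [hNval, hζnorm, he_def]
    rw [EuclideanSpace.inner_single_right]
    rw [hζc j]
    by_cases h : j = 0 <;> simp [h]
    exact inv_mul_cancel₀ ht.ne'
  have hebc : (e b) c = if c = b then 1 else 0 := by
    simp [he_def, EuclideanSpace.single_apply]
  have hval : (fderiv ℝ ψ ζ) (e b) = (deriv γ t / t) * (if c = b then 1 else 0) +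
      (if c = 0 then t else 0) * (((deriv (deriv γ) t * t - deriv γ t * 1) / t ^ 2) *
        (if b = 0 then 1 else 0)) := by
    rw [hψd.fderiv]
    simp only [ContinuousLinearMap.add_apply, ContinuousLinearMap.coe_smul', Pi.smul_apply,
      smul_eq_mul, Function.comp_apply, hζnorm, hNeb b, hζc c]
    congr 1
    have : (EuclideanSpace.proj c : E2 →L[ℝ] ℝ) (e b) = (e b) c := rfl
    rw [this, hebc]
  rw [hψ_def] at hval
  rw [hval]
  fin_cases b <;> fin_cases c <;> simp <;> field_simp <;> ring

lemma quad_coeffs (a b c : ℝ) (h : ∀ s : ℝ, 0 ≤ a * s ^ 2 + b * s + c) :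
    0 ≤ a ∧ 0 ≤ c ∧ b ^ 2 ≤ 4 * (a * c) := by
  have hc : 0 ≤ c := by have := h 0; simpa using this
  have hd : discrim a b c ≤ 0 := by
    apply discrim_le_zero
    intro x
    have := h x
    nlinarith [this]
  rw [discrim] at hd
  have hb : b ^ 2 ≤ 4 * (a * c) := by nlinarith
  refine ⟨?_, hc, hb⟩
  by_contra ha
  push_neg at ha
  nlinarith [h 1, h (-1)]

lemma mono_basic (f : ℝ → ℝ) {a b : ℝ} (hab : a ≤ b)
    (hcont : ContinuousOn f (Set.Icc a b))
    (hder : ∀ x, a < x → x < b → DifferentiableAt ℝ f x ∧ 0 ≤ deriv f x) :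
    f a ≤ f b := by
  have := monotoneOn_of_deriv_nonneg (convex_Icc a b) hcont
    (by
      rw [interior_Icc]
      intro x hx
      exact ((hder x hx.1 hx.2).1).differentiableWithinAt)
    (by
      rw [interior_Icc]
      intro x hx
      exact (hder x hx.1 hx.2).2)
  exact this (Set.left_mem_Icc.mpr hab) (Set.right_mem_Icc.mpr hab) hab

lemma mono_except (f : ℝ → ℝ) (c : ℝ) {a b : ℝ} (hab : a ≤ b)
    (hcont : ContinuousOn f (Set.Icc a b))
    (hder : ∀ x, a < x → x < b → x ≠ c → DifferentiableAt ℝ f x ∧ 0 ≤ deriv f x) :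
    f a ≤ f b := by
  by_cases hc : a < c ∧ c < b
  · have h1 : f a ≤ f c := mono_basic f hc.1.le
      (hcont.mono (Set.Icc_subset_Icc le_rfl hc.2.le))
      (fun x hx1 hx2 => hder x hx1 (hx2.trans hc.2) (ne_of_lt hx2))
    have h2 : f c ≤ f b := mono_basic f hc.2.le
      (hcont.mono (Set.Icc_subset_Icc hc.1.le le_rfl))
      (fun x hx1 hx2 => hder x (hc.1.trans hx1) hx2 (ne_of_gt hx1))
    linarith
  · push_neg at hc
    apply mono_basic f hab hcont
    intro x hx1 hx2
    refine hder x hx1 hx2 ?_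
    intro hxc
    subst hxc
    exact absurd hx2 (not_lt.mpr (hc hx1))


lemma anti_basic (f : ℝ → ℝ) {a b : ℝ} (hab : a ≤ b)
    (hcont : ContinuousOn f (Set.Icc a b))
    (hder : ∀ x, a < x → x < b → DifferentiableAt ℝ f x ∧ deriv f x ≤ 0) :
    f b ≤ f a := by
  have := antitoneOn_of_deriv_nonpos (convex_Icc a b) hcont
    (by
      rw [interior_Icc]
      intro x hx
      exact ((hder x hx.1 hx.2).1).differentiableWithinAt)
    (by
      rw [interior_Icc]
      intro x hx
      exact (hder x hx.1 hx.2).2)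
  exact this (Set.left_mem_Icc.mpr hab) (Set.right_mem_Icc.mpr hab) hab

lemma anti_except (f : ℝ → ℝ) (c : ℝ) {a b : ℝ} (hab : a ≤ b)
    (hcont : ContinuousOn f (Set.Icc a b))
    (hder : ∀ x, a < x → x < b → x ≠ c → DifferentiableAt ℝ f x ∧ deriv f x ≤ 0) :
    f b ≤ f a := by
  by_cases hc : a < c ∧ c < b
  · have h1 : f c ≤ f a := anti_basic f hc.1.le
      (hcont.mono (Set.Icc_subset_Icc le_rfl hc.2.le))
      (fun x hx1 hx2 => hder x hx1 (hx2.trans hc.2) (ne_of_lt hx2))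
    have h2 : f b ≤ f c := anti_basic f hc.2.le
      (hcont.mono (Set.Icc_subset_Icc hc.1.le le_rfl))
      (fun x hx1 hx2 => hder x (hc.1.trans hx1) hx2 (ne_of_gt hx1))
    linarith
  · push_neg at hc
    apply anti_basic f hab hcont
    intro x hx1 hx2
    refine hder x hx1 hx2 ?_
    intro hxc
    subst hxc
    exact absurd hx2 (not_lt.mpr (hc hx1))

lemma genHess1_eval_abstract {d : ℕ} (A : Matrix (Fin d) (Fin d) ℂ)
    (Φ : EuclideanSpace ℝ (Fin 2) → ℝ) (ζ : EuclideanSpace ℝ (Fin 2)) (α β : ℝ)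
    (hH : ∀ b c : Fin 2, hessE Φ ζ b c =
      if b = 0 then (if c = 0 then α else 0) else (if c = 0 then 0 else β))
    (m₀ n₀ : Fin d) (s : ℝ) :
    genHess1 A Φ ζ
      (fun p => if p.1 = 0 then (if p.2 = m₀ then 1 else 0) else (if p.2 = n₀ then s else 0))
    = (β * (A n₀ n₀).re) * s ^ 2
      + (β * (A n₀ m₀).im - α * (A m₀ n₀).im) * s
      + α * (A m₀ m₀).re := by
  unfold genHess1 realForm
  simp only [Fin.sum_univ_two, hH, Matrix.conjTranspose_apply, Complex.star_def,
    Complex.conj_re, Complex.conj_im]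
  simp only [show ((0:Fin 2) = 0) = True by simp, show ((1:Fin 2) = 0) = False by simp,
    if_true, if_false, ite_true, ite_false]
  simp only [mul_ite, ite_mul, zero_mul, mul_zero, mul_one, one_mul, zero_add, add_zero,
    Finset.sum_ite_eq', Finset.mem_univ, if_true, Finset.sum_const_zero]
  simp only [mul_add, mul_ite, mul_zero, mul_one, add_zero, zero_add, Finset.sum_add_distrib,
    Finset.sum_ite_eq', Finset.mem_univ, if_true, Finset.sum_const_zero]
  ring

end Stmt15Aux

set_option maxHeartbeats 2000000 in
/-- if moreover `Im A ≠ 0`, then either `γ` is constant on `[0,∞)` or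
`γ'(t) > 0` for all `t > 0`. -/
theorem stmt15 {d : ℕ} (A : Matrix (Fin d) (Fin d) ℂ) (lam : ℝ) (hlam : 0 < lam)
    (hell : ∀ ξ : EuclideanSpace ℂ (Fin d),
      lam * ‖ξ‖ ^ 2 ≤ (@inner ℂ _ _ (mulVecE A ξ) ξ).re)
    (hIm : ∃ m n, (A m n).im ≠ 0)
    (t₀ : ℝ) (ht₀ : 0 < t₀) (γ : ℝ → ℝ)
    (hγ1 : ContDiffOn ℝ 1 γ (Set.Ici 0))
    (hγ2 : ContDiffOn ℝ 2 γ (Set.Ioi 0 \ {t₀}))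
    (hconv : ∀ ζ : EuclideanSpace ℝ (Fin 2), ζ ≠ 0 → ‖ζ‖ ≠ t₀ →
      ∀ X : Fin 2 × Fin d → ℝ, 0 ≤ genHess1 A (fun w => γ ‖w‖) ζ X) :
    (∀ s ∈ Set.Ici (0 : ℝ), ∀ t ∈ Set.Ici (0 : ℝ), γ s = γ t) ∨
      (∀ t : ℝ, 0 < t → 0 < deriv γ t) := by
  classical
  obtain ⟨m₀, n₀, hσne⟩ := hIm
  have hdiag : ∀ m : Fin d, lam ≤ (A m m).re := by
    intro m
    have h := hell (EuclideanSpace.single m 1)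
    rw [EuclideanSpace.norm_single] at h
    simp only [norm_one, one_pow, mul_one] at h
    have heq : (@inner ℂ _ _ (mulVecE A (EuclideanSpace.single m 1)) (EuclideanSpace.single m 1))
        = conj (A m m) := by
      rw [PiLp.inner_apply]
      simp only [mulVecE, EuclideanSpace.single_apply]
      rw [Finset.sum_eq_single m]
      · simp [Finset.sum_eq_single m, RCLike.inner_apply]
      · intro b _ hb; simp [hb]
      · simp
    rw [heq] at h
    simpa using h
  have hq₁ : (0:ℝ) < (A m₀ m₀).re := lt_of_lt_of_le hlam (hdiag m₀)
  have hq₂ : (0:ℝ) < (A n₀ n₀).re := lt_of_lt_of_le hlam (hdiag n₀)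
  have hσ2 : (0:ℝ) < (A m₀ n₀).im ^ 2 :=
    lt_of_le_of_ne (sq_nonneg _) (Ne.symm (pow_ne_zero 2 hσne))
  set q₁ : ℝ := (A m₀ m₀).re
  set q₂ : ℝ := (A n₀ n₀).re
  set σ : ℝ := (A m₀ n₀).im
  set τ : ℝ := (A n₀ m₀).im
  have hC : (0:ℝ) < 8 * q₁ * q₂ + 2 * σ ^ 2 + 2 * τ ^ 2 := by positivity
  set C : ℝ := 8 * q₁ * q₂ + 2 * σ ^ 2 + 2 * τ ^ 2 with hC_def
  -- pointwise consequences of A-convexity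
  have key : ∀ t : ℝ, 0 < t → t ≠ t₀ →
      0 ≤ deriv (deriv γ) t ∧ 0 ≤ deriv γ t ∧
        deriv (deriv γ) t * t * σ ^ 2 ≤ deriv γ t * C := by
    intro t ht htt
    set ζ : EuclideanSpace ℝ (Fin 2) := t • EuclideanSpace.single (0 : Fin 2) (1:ℝ) with hζ_def
    have hζnorm : ‖ζ‖ = t := by
      rw [hζ_def, norm_smul, EuclideanSpace.norm_single]
      simp [abs_of_pos ht]
    have hζ0 : ζ ≠ 0 := by
      intro h0
      rw [h0, norm_zero] at hζnorm
      exact ht.ne hζnorm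
    have hζt₀ : ‖ζ‖ ≠ t₀ := by rw [hζnorm]; exact htt
    have hH := Stmt15Aux.hess_eq γ t₀ hγ2 ht htt
    have hquad1 : ∀ s : ℝ, 0 ≤ (deriv γ t / t * q₂) * s ^ 2
        + (deriv γ t / t * τ - deriv (deriv γ) t * σ) * s + deriv (deriv γ) t * q₁ := by
      intro s
      have h := hconv ζ hζ0 hζt₀
        (fun p => if p.1 = 0 then (if p.2 = m₀ then 1 else 0) else (if p.2 = n₀ then s else 0))
      rwa [Stmt15Aux.genHess1_eval_abstract A _ ζ (deriv (deriv γ) t) (deriv γ t / t) hH m₀ n₀ s]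
        at h
    have hquad2 : ∀ s : ℝ, 0 ≤ (deriv γ t / t * q₁) * s ^ 2
        + (deriv γ t / t * σ - deriv (deriv γ) t * τ) * s + deriv (deriv γ) t * q₂ := by
      intro s
      have h := hconv ζ hζ0 hζt₀
        (fun p => if p.1 = 0 then (if p.2 = n₀ then 1 else 0) else (if p.2 = m₀ then s else 0))
      rwa [Stmt15Aux.genHess1_eval_abstract A _ ζ (deriv (deriv γ) t) (deriv γ t / t) hH n₀ m₀ s]
        at h
    obtain ⟨ha1, hc1, hd1⟩ := Stmt15Aux.quad_coeffs _ _ _ hquad1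
    obtain ⟨ha2, hc2, hd2⟩ := Stmt15Aux.quad_coeffs _ _ _ hquad2
    have hβ : 0 ≤ deriv γ t / t := by nlinarith
    have hα : 0 ≤ deriv (deriv γ) t := by nlinarith
    have hgt : 0 ≤ deriv γ t := by
      have h := mul_nonneg hβ ht.le
      rwa [div_mul_cancel₀ _ ht.ne'] at h
    refine ⟨hα, hgt, ?_⟩
    have hmain : deriv (deriv γ) t * σ ^ 2 ≤ (deriv γ t / t) * C := by
      rcases eq_or_lt_of_le hα with h0 | hpos
      · rw [← h0]
        have := mul_nonneg hβ hC.le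
        nlinarith
      · have hs : (deriv (deriv γ) t) ^ 2 * σ ^ 2
            ≤ (deriv (deriv γ) t) * ((deriv γ t / t) * C) := by
          nlinarith [hd1, hd2, sq_nonneg (deriv (deriv γ) t * τ - (deriv γ t / t) * σ),
            mul_nonneg (mul_nonneg hα hβ) (sq_nonneg (σ - τ)),
            mul_nonneg (mul_nonneg hα hβ) (sq_nonneg (σ + τ))]
        nlinarith [hs, hpos]
    calc deriv (deriv γ) t * t * σ ^ 2 = (deriv (deriv γ) t * σ ^ 2) * t := by ring
      _ ≤ ((deriv γ t / t) * C) * t := mul_le_mul_of_nonneg_right hmain ht.le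
      _ = deriv γ t * C := by field_simp
  have hopen : IsOpen (Set.Ioi (0:ℝ) \ {t₀}) := isOpen_Ioi.sdiff isClosed_singleton
  have hg_cont : ContinuousOn (deriv γ) (Set.Ioi 0) :=
    (hγ1.mono Set.Ioi_subset_Ici_self).continuousOn_deriv_of_isOpen isOpen_Ioi le_rfl
  have hg_diff : ∀ x : ℝ, 0 < x → x ≠ t₀ → DifferentiableAt ℝ (deriv γ) x := by
    intro x hx hxc
    have h2 := hγ2.deriv_of_isOpen (m := 1) hopen (by norm_num)
    exact (h2.contDiffAt (hopen.mem_nhds ⟨hx, hxc⟩)).differentiableAt one_ne_zero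
  have hg_nonneg : ∀ t : ℝ, 0 < t → 0 ≤ deriv γ t := by
    intro t ht
    by_cases htt : t = t₀
    · subst htt
      have hcont : ContinuousAt (deriv γ) t := hg_cont.continuousAt (isOpen_Ioi.mem_nhds ht)
      have htend : Filter.Tendsto (deriv γ) (nhdsWithin t {t}ᶜ) (nhds (deriv γ t)) :=
        hcont.tendsto.mono_left nhdsWithin_le_nhds
      refine ge_of_tendsto htend ?_
      have h1 : ∀ᶠ x in nhdsWithin t {t}ᶜ, 0 < x :=
        ((isOpen_Ioi.eventually_mem ht).filter_mono nhdsWithin_le_nhds)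
      have h2 : ∀ᶠ x in nhdsWithin t {t}ᶜ, x ≠ t :=
        eventually_mem_nhdsWithin.mono (fun x hx => hx)
      filter_upwards [h1, h2] with x hx1 hx2
      exact (key x hx1 hx2).2.1
    · exact (key t ht htt).2.1
  have hg_mono : ∀ a b : ℝ, 0 < a → a ≤ b → deriv γ a ≤ deriv γ b := by
    intro a b ha hab
    apply Stmt15Aux.mono_except (deriv γ) t₀ hab
    · apply hg_cont.mono
      intro x hx
      exact lt_of_lt_of_le ha hx.1
    · intro x hx1 hx2 hxc
      exact ⟨hg_diff x (ha.trans hx1) hxc, (key x (ha.trans hx1) hxc).1⟩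
  by_cases hzero : ∃ u : ℝ, 0 < u ∧ deriv γ u = 0
  · left
    obtain ⟨u, hu, hgu⟩ := hzero
    have hgz : ∀ t : ℝ, 0 < t → deriv γ t = 0 := by
      intro t ht
      rcases le_or_gt t u with h | h
      · have h1 := hg_mono t u ht h
        have h2 := hg_nonneg t ht
        rw [hgu] at h1
        linarith
      · set K : ℝ := C / σ ^ 2 with hK_def
        have hK0 : 0 < K := div_pos hC hσ2
        have hCK : C = K * σ ^ 2 := by
          rw [hK_def]
          field_simp
        have hφ : deriv γ t * t ^ (-K) ≤ deriv γ u * u ^ (-K) := by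
          apply Stmt15Aux.anti_except (fun y : ℝ => deriv γ y * y ^ (-K)) t₀ h.le
          · apply ContinuousOn.mul
            · apply hg_cont.mono
              intro x hx
              exact lt_of_lt_of_le hu hx.1
            · apply ContinuousOn.rpow_const continuousOn_id
              intro x hx
              exact Or.inl (ne_of_gt (lt_of_lt_of_le hu hx.1))
          · intro x hx1 hx2 hxc
            have hx0 : 0 < x := hu.trans hx1
            have hgd := hg_diff x hx0 hxc
            have hrd : HasDerivAt (fun y : ℝ => y ^ (-K)) (-K * x ^ (-K - 1)) x := by
              simpa using Real.hasDerivAt_rpow_const (p := -K) (Or.inl hx0.ne')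
            have hprod : HasDerivAt (fun y : ℝ => deriv γ y * y ^ (-K))
                (deriv (deriv γ) x * x ^ (-K) + deriv γ x * (-K * x ^ (-K - 1))) x :=
              hgd.hasDerivAt.mul hrd
            refine ⟨hprod.differentiableAt, ?_⟩
            rw [hprod.deriv]
            have hxK : x ^ (-K) = x ^ (-K - 1) * x := by
              rw [← Real.rpow_add_one hx0.ne' (-K - 1)]
              congr 1
              ring
            have hkey := (key x hx0 hxc).2.2
            rw [hCK] at hkey
            have h2 : deriv (deriv γ) x * x - K * deriv γ x ≤ 0 := by nlinarith [hσ2]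
            have h1 : (0:ℝ) ≤ x ^ (-K - 1) := (Real.rpow_pos_of_pos hx0 _).le
            calc deriv (deriv γ) x * x ^ (-K) + deriv γ x * (-K * x ^ (-K - 1))
                = x ^ (-K - 1) * (deriv (deriv γ) x * x - K * deriv γ x) := by
                  rw [hxK]; ring
              _ ≤ 0 := mul_nonpos_of_nonneg_of_nonpos h1 h2
        rw [hgu, zero_mul] at hφ
        have hpow : (0:ℝ) < t ^ (-K) := Real.rpow_pos_of_pos ht _
        have hge := hg_nonneg t ht
        nlinarith
    intro s hs t ht
    have hdiffγ : DifferentiableOn ℝ γ (interior (Set.Ici (0:ℝ))) :=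
      (hγ1.differentiableOn one_ne_zero).mono interior_subset
    have hmono : MonotoneOn γ (Set.Ici (0:ℝ)) :=
      monotoneOn_of_deriv_nonneg (convex_Ici 0) hγ1.continuousOn hdiffγ
        (fun x hx => by
          rw [interior_Ici] at hx
          exact (hgz x hx).ge)
    have hanti : AntitoneOn γ (Set.Ici (0:ℝ)) :=
      antitoneOn_of_deriv_nonpos (convex_Ici 0) hγ1.continuousOn hdiffγ
        (fun x hx => by
          rw [interior_Ici] at hx
          exact (hgz x hx).le)
    rcases le_total s t with h | h
    · exact le_antisymm (hmono hs ht h) (hanti hs ht h)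
    · exact (le_antisymm (hmono ht hs h) (hanti ht hs h)).symm
  · right
    push_neg at hzero
    intro t ht
    exact lt_of_le_of_ne (hg_nonneg t ht) (Ne.symm (hzero t ht))
end
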